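/- Let π^ε = π₁^{ε₁}⋯πₙ^{εₙ} be a permutation in the clean compact peg basis of B̂_k^{rd}. Then the first entry π₁^{ε₁} is not 1 decorated + or •, and the last entry πₙ^{εₙ} is not n decorated + or •. -/

import Mathlib

/-! ## Basic definitions: permutations as lists, reversals, distances -/

/-- Decorations for peg permutations: `+`, `-`, `•`. -/
inductive Deco where
  | plus : Deco
  | minus : Deco
  | dot : Deco
deriving DecidableEq, Repr

/-- A peg permutation: a list of entries together with decorations. -/
abbrev PegPerm := List (ℕ × Deco)

def pegDefault : ℕ × Deco := (0, Deco.dot)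

/-- The identity permutation `1 2 ⋯ n` as a list. -/
def idPerm (n : ℕ) : List ℕ := List.range' 1 n

/-- A list of naturals is a permutation (of `1,…,n` where `n` is its length). -/
def IsPermList (π : List ℕ) : Prop := π.Perm (idPerm π.length)

/-- Reverse the segment of a list from (0-indexed) position `i` to `j` inclusive. -/
def segReverse {α : Type*} (l : List α) (i j : ℕ) : List α :=
  l.take i ++ ((l.drop i).take (j + 1 - i)).reverse ++ l.drop (j + 1)

/-- One reversal step on permutations (reverse a segment of length at least 2). -/
def RevStep (l l' : List ℕ) : Prop :=
  ∃ i j, i < j ∧ j < l.length ∧ l' = segReverse l i j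

/-- One prefix reversal step on permutations (reverse a prefix of length at least 2). -/
def PrefRevStep (l l' : List ℕ) : Prop :=
  ∃ j, 0 < j ∧ j < l.length ∧ l' = segReverse l 0 j

/-- Reachability in exactly `k` steps of the step relation `step`. -/
def ReachIn {α : Type*} (step : α → α → Prop) : ℕ → α → α → Prop
  | 0, x, y => x = y
  | k + 1, x, y => ∃ z, step x z ∧ ReachIn step k z y

/-- The reversal distance of a permutation from the identity. -/
noncomputable def rd (π : List ℕ) : ℕ :=
  sInf {k | ReachIn RevStep k π (idPerm π.length)}

/-- The prefix reversal distance of a permutation from the identity. -/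
noncomputable def prd (π : List ℕ) : ℕ :=
  sInf {k | ReachIn PrefRevStep k π (idPerm π.length)}

/-- The ball of radius `k` in the reversal model. -/
def Brd (k : ℕ) : Set (List ℕ) := {π | IsPermList π ∧ rd π ≤ k}

/-- The ball of radius `k` in the prefix reversal model. -/
def Bprd (k : ℕ) : Set (List ℕ) := {π | IsPermList π ∧ prd π ≤ k}

/-! ## Peg permutations: oriented reversals and distances -/

def flipDeco : Deco → Deco
  | Deco.plus => Deco.minus
  | Deco.minus => Deco.plus
  | Deco.dot => Deco.dot

/-- Oriented reversal of the segment from position `i` to `j` (0-indexed) of a peg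
permutation: the segment is reversed and the decorations `+`, `-` are swapped. -/
def pegSegReverse (l : PegPerm) (i j : ℕ) : PegPerm :=
  l.take i ++ (((l.drop i).take (j + 1 - i)).map (fun p => (p.1, flipDeco p.2))).reverse
    ++ l.drop (j + 1)

/-- One oriented reversal step on peg permutations. -/
def PegRevStep (l l' : PegPerm) : Prop :=
  ∃ i j, i ≤ j ∧ j < l.length ∧ l' = pegSegReverse l i j

/-- One oriented prefix reversal step on peg permutations. -/
def PegPrefRevStep (l l' : PegPerm) : Prop :=
  ∃ j, j < l.length ∧ l' = pegSegReverse l 0 j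

/-- The underlying list of a peg permutation is a permutation. -/
def IsPegPermList (l : PegPerm) : Prop := IsPermList (l.map Prod.fst)

/-- An identity peg permutation: underlying identity, every decoration `+` or `•`. -/
def IsIdPeg (l : PegPerm) : Prop :=
  l.map Prod.fst = idPerm l.length ∧ ∀ p ∈ l, p.2 ≠ Deco.minus

/-- The reversal distance of a peg permutation from an identity peg permutation. -/
noncomputable def pegRd (l : PegPerm) : ℕ :=
  sInf {k | ∃ m, IsIdPeg m ∧ ReachIn PegRevStep k l m}

/-- The prefix reversal distance of a peg permutation from an identity peg permutation. -/
noncomputable def pegPrd (l : PegPerm) : ℕ :=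
  sInf {k | ∃ m, IsIdPeg m ∧ ReachIn PegPrefRevStep k l m}

/-- The ball of radius `k` of peg permutations in the reversal model. -/
def PegBrd (k : ℕ) : Set PegPerm := {l | IsPegPermList l ∧ pegRd l ≤ k}

/-- The ball of radius `k` of peg permutations in the prefix reversal model. -/
def PegBprd (k : ℕ) : Set PegPerm := {l | IsPegPermList l ∧ pegPrd l ≤ k}

/-! ## Patterns -/

/-- Two lists of the same length are order-isomorphic. -/
def OrderIsoList (s t : List ℕ) : Prop :=
  s.length = t.length ∧
  ∀ i j, i < s.length → j < s.length → (s.getD i 0 < s.getD j 0 ↔ t.getD i 0 < t.getD j 0)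

/-- `σ` is a (classical) pattern of `τ`. -/
def IsPattern (σ τ : List ℕ) : Prop :=
  ∃ s, s.Sublist τ ∧ OrderIsoList s σ

/-- `σ` is a peg pattern of `τ`: some subsequence of `τ` is order-isomorphic to `σ`
and whenever an entry of the subsequence is decorated `+` (resp. `-`), the
corresponding entry of `σ` is decorated `+` (resp. `-`). -/
def IsPegPattern (σ τ : PegPerm) : Prop :=
  ∃ s : PegPerm, s.Sublist τ ∧ OrderIsoList (s.map Prod.fst) (σ.map Prod.fst) ∧
    ∀ i, i < s.length →
      ((s.getD i pegDefault).2 = Deco.plus → (σ.getD i pegDefault).2 = Deco.plus) ∧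
      ((s.getD i pegDefault).2 = Deco.minus → (σ.getD i pegDefault).2 = Deco.minus)

/-! ## Strips, clean compact and compact peg permutations -/

/-- Two adjacent entries of a peg permutation lie in a common strip. -/
def StripPair (p q : ℕ × Deco) : Prop :=
  (q.1 = p.1 + 1 ∧ p.2 ≠ Deco.minus ∧ q.2 ≠ Deco.minus) ∨
  (p.1 = q.1 + 1 ∧ p.2 ≠ Deco.plus ∧ q.2 ≠ Deco.plus)

/-- A peg permutation is clean compact when all its strips have length 1, i.e. no two
adjacent entries lie in a common strip. -/
def CleanCompact (l : PegPerm) : Prop :=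
  ∀ i, i + 1 < l.length → ¬ StripPair (l.getD i pegDefault) (l.getD (i + 1) pegDefault)

/-- A peg permutation is compact when every strip has length 1 or consists
exclusively of entries decorated `•`. -/
def CompactPeg (l : PegPerm) : Prop :=
  ∀ i, i + 1 < l.length → StripPair (l.getD i pegDefault) (l.getD (i + 1) pegDefault) →
    (l.getD i pegDefault).2 = Deco.dot ∧ (l.getD (i + 1) pegDefault).2 = Deco.dot

/-! ## The clean compact peg permutation `peg(γ)` associated with a permutation -/

/-- The decomposition of a permutation into maximal monotone strips of adjacent values. -/
def stripGroups (γ : List ℕ) : List (List ℕ) :=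
  γ.splitBy (fun a b => b == a + 1 || a == b + 1)

def stripMin (s : List ℕ) : ℕ := s.foldr min (s.headD 0)

def stripDeco (s : List ℕ) : Deco :=
  if s.length ≤ 1 then Deco.dot
  else if s.headD 0 < s.getLastD 0 then Deco.plus
  else Deco.minus

/-- Rank of `v` among `vals` (used for rescaling). -/
def rankIn (vals : List ℕ) (v : ℕ) : ℕ := (vals.filter (fun w => w ≤ v)).length

/-- The clean compact peg permutation associated with a permutation: replace each
strip by its minimum, decorated `+`/`-`/`•` according to the kind of strip, and rescale. -/
def pegOf (γ : List ℕ) : PegPerm :=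
  (stripGroups γ).map (fun s => (rankIn ((stripGroups γ).map stripMin) (stripMin s), stripDeco s))

/-! ## Monotone inflations and grid classes -/

/-- A legal inflation vector for a peg permutation. -/
def LegalVec (πε : PegPerm) (v : List ℕ) : Prop :=
  v.length = πε.length ∧
  ∀ i, i < πε.length → (πε.getD i pegDefault).2 = Deco.dot → v.getD i 0 ≤ 1

/-- The values of the `i`-th block of the monotone inflation of `πε` through `v`:
an increasing (resp. decreasing) run of `vᵢ` values, occupying the interval of values
determined by the relative order of the entries of `πε`. -/
def blockVals (πε : PegPerm) (v : List ℕ) (i : ℕ) : List ℕ :=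
  let off := (((List.range πε.length).filter
      (fun j => (πε.getD j pegDefault).1 < (πε.getD i pegDefault).1)).map
      (fun j => v.getD j 0)).sum
  if (πε.getD i pegDefault).2 = Deco.minus then (List.range' (off + 1) (v.getD i 0)).reverse
  else List.range' (off + 1) (v.getD i 0)

/-- The monotone inflation `πε[v]`. -/
def inflate (πε : PegPerm) (v : List ℕ) : List ℕ :=
  ((List.range πε.length).map (blockVals πε v)).flatten

/-- The grid class of a peg permutation: all its monotone inflations through legal
inflation vectors. -/
def GridOf (πε : PegPerm) : Set (List ℕ) :=
  {γ | ∃ v, LegalVec πε v ∧ γ = inflate πε v}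

/-- Compatibility of decorations in peg monotone inflations: a `+` entry is inflated by
an identity peg permutation (decorations `+`/`•`), a `-` entry by a reverse identity peg
permutation (decorations `-`/`•`), a `•` entry stays `•`. -/
def DecoOK : Deco → Deco → Prop
  | Deco.plus, d => d ≠ Deco.minus
  | Deco.minus, d => d ≠ Deco.plus
  | Deco.dot, d => d = Deco.dot

/-- The peg grid class of a peg permutation: all its peg monotone inflations. -/
def GridPegOf (πε : PegPerm) : Set PegPerm :=
  {γ | ∃ v, LegalVec πε v ∧ ∃ bs : List PegPerm,
    bs.length = πε.length ∧ γ = bs.flatten ∧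
    ∀ i, i < πε.length →
      (bs.getD i []).map Prod.fst = blockVals πε v i ∧
      ∀ p ∈ bs.getD i [], DecoOK (πε.getD i pegDefault).2 p.2}

/-! ## The inflation `π^ε_I` and the permutation `π̃^ε_I` -/

/-- Canonical peg inflation: every inflated entry keeps the decoration of the
original one. -/
def pegInflate (πε : PegPerm) (v : List ℕ) : PegPerm :=
  ((List.range πε.length).map
    (fun i => (blockVals πε v i).map (fun x => (x, (πε.getD i pegDefault).2)))).flatten

/-- The inflation vector associated with the multiset `I = {i, j}` (0-indexed):
entries `i` and `j` are inflated by one more element each. -/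
def inflVec (n i j : ℕ) : List ℕ :=
  (List.range n).map (fun l => 1 + (if l = i then 1 else 0) + (if l = j then 1 else 0))

/-- `π^ε_I` where `I = {i, j}` with `i ≤ j` 0-indexed. -/
def pegI (πε : PegPerm) (i j : ℕ) : PegPerm := pegInflate πε (inflVec πε.length i j)

/-- `π̃^ε_I`: the result of applying to `π^ε_I` the oriented reversal of the segment
of (0-indexed) positions `i+1, …, j+1`. -/
def pegITilde (πε : PegPerm) (i j : ℕ) : PegPerm := pegSegReverse (pegI πε i j) (i + 1) (j + 1)

/-! ## Clean compact peg bases -/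

/-- The clean compact peg basis of a set `B` of peg permutations: the clean compact
peg permutations not in `B` all of whose proper clean compact peg patterns are in `B`. -/
def CCPegBasis (B : Set PegPerm) : Set PegPerm :=
  {πε | IsPegPermList πε ∧ CleanCompact πε ∧ πε ∉ B ∧
    ∀ γ, IsPegPermList γ → CleanCompact γ → IsPegPattern γ πε → γ ≠ πε → γ ∈ B}

/-! ## The exceptional peg permutations for the prefix reversal model -/

/-- `Θ_e(n)` for even `n`:  `n• (n−2)• ⋯ 4• 2• 1⁺ 3• ⋯ (n−3)• (n−1)•`. -/
def ThetaE (n : ℕ) : PegPerm :=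
  ((List.range (n / 2)).map (fun i => (n - 2 * i, Deco.dot))) ++ [(1, Deco.plus)] ++
  ((List.range (n / 2 - 1)).map (fun i => (3 + 2 * i, Deco.dot)))

/-- `Θ_o(n)` for odd `n`:  `n• (n−2)• ⋯ 3• 1⁻ 2• 4• ⋯ (n−3)• (n−1)•`. -/
def ThetaO (n : ℕ) : PegPerm :=
  ((List.range ((n - 1) / 2)).map (fun i => (n - 2 * i, Deco.dot))) ++ [(1, Deco.minus)] ++
  ((List.range ((n - 1) / 2)).map (fun i => (2 + 2 * i, Deco.dot)))

/-- `Λ_e(n)` for even `n` and `t = n/2`:  `(t+1)⁺ t• (t+2)• (t−1)• ⋯ (n−1)• 2• n• 1•`. -/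
def LambdaE (n : ℕ) : PegPerm :=
  (List.range (n / 2)).flatMap
    (fun i => [(n / 2 + 1 + i, if i = 0 then Deco.plus else Deco.dot), (n / 2 - i, Deco.dot)])

/-- `Λ_o(n)` for odd `n` and `t = (n+1)/2`:  `t⁻ (t+1)• (t−1)• (t+2)• ⋯ (n−1)• 2• n• 1•`. -/
def LambdaO (n : ℕ) : PegPerm :=
  ((n + 1) / 2, Deco.minus) ::
    (List.range ((n + 1) / 2 - 1)).flatMap
      (fun i => [((n + 1) / 2 + 1 + i, Deco.dot), ((n + 1) / 2 - 1 - i, Deco.dot)])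

/-!
Every peg permutation can be sorted by oriented reversals (bring the maximum to the end, fix
its sign by reversing that single entry, recurse), so `pegRd` is attained by an actual
sorting. If a basis element began with `1⁺` or `1•`, deleting that entry would leave a proper
clean compact peg pattern, hence an element of `B̂_k^{rd}`; its sortings act verbatim on the
remaining entries of the original, whose first entry is already in place with an admissible
decoration, so the original would lie in `B̂_k^{rd}` as well. A final `n⁺` or `n•` is
handled the same way.
-/

namespace ReachIn

variable {α β : Type*} {r : α → α → Prop} {s : β → β → Prop}

theorem trans {a b : ℕ} {x y z : α} (h₁ : ReachIn r a x y) (h₂ : ReachIn r b y z) :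
    ReachIn r (a + b) x z := by
  induction a generalizing x with
  | zero => cases h₁; simpa using h₂
  | succ a ih =>
    obtain ⟨w, hxw, hwy⟩ := h₁
    rw [Nat.add_right_comm]
    exact ⟨w, hxw, ih hwy⟩

theorem map {f : α → β} (hf : ∀ x y, r x y → s (f x) (f y)) {k : ℕ} {x y : α}
    (h : ReachIn r k x y) : ReachIn s k (f x) (f y) := by
  induction k generalizing x with
  | zero => exact congrArg f h
  | succ k ih =>
    obtain ⟨z, hxz, hzy⟩ := h
    exact ⟨f z, hf x z hxz, ih hzy⟩

theorem apply_eq {g : α → β} (hg : ∀ x y, r x y → g y = g x) {k : ℕ} {x y : α}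
    (h : ReachIn r k x y) : g y = g x := by
  induction k generalizing x with
  | zero => exact congrArg g h.symm
  | succ k ih =>
    obtain ⟨z, hxz, hzy⟩ := h
    rw [ih hzy, hg x z hxz]

end ReachIn

def pegShift (l : PegPerm) : PegPerm := l.map fun p => (p.1 + 1, p.2)

section Reversal

variable {l : PegPerm} {i j : ℕ}

theorem length_pegSegReverse (hij : i ≤ j) (hj : j < l.length) :
    (pegSegReverse l i j).length = l.length := by
  simp [pegSegReverse]
  omega

theorem pegSegReverse_cons (p : ℕ × Deco) (l : PegPerm) (i j : ℕ) :
    pegSegReverse (p :: l) (i + 1) (j + 1) = p :: pegSegReverse l i j := by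
  simp [pegSegReverse]

theorem pegSegReverse_append (l' : PegPerm) (hij : i ≤ j) (hj : j < l.length) :
    pegSegReverse (l ++ l') i j = pegSegReverse l i j ++ l' := by
  unfold pegSegReverse
  rw [List.take_append_of_le_length (by omega), List.drop_append_of_le_length (by omega),
    List.drop_append_of_le_length (by omega), List.take_append_of_le_length (by simp; omega)]
  simp

theorem pegSegReverse_map (g : ℕ → ℕ) (l : PegPerm) (i j : ℕ) :
    pegSegReverse (l.map fun p => (g p.1, p.2)) i j
      = (pegSegReverse l i j).map fun p => (g p.1, p.2) := by
  simp [pegSegReverse, ← List.map_take, ← List.map_drop, Function.comp_def]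

theorem map_fst_pegSegReverse_perm (hij : i ≤ j) :
    ((pegSegReverse l i j).map Prod.fst).Perm (l.map Prod.fst) := by
  have hsplit : l = l.take i ++ ((l.drop i).take (j + 1 - i) ++ l.drop (j + 1)) := by
    rw [show l.drop (j + 1) = (l.drop i).drop (j + 1 - i) by
      rw [List.drop_drop, show i + (j + 1 - i) = j + 1 by omega], List.take_append_drop,
      List.take_append_drop]
  conv_rhs => rw [hsplit]
  simp only [pegSegReverse, List.map_append, List.map_reverse, List.map_map, List.append_assoc]
  exact .append_left _ (.append_right _ (List.reverse_perm _))

theorem pegSegReverse_last (l : PegPerm) (q : ℕ × Deco) :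
    pegSegReverse (l ++ [q]) l.length l.length = l ++ [(q.1, flipDeco q.2)] := by
  simp [pegSegReverse]

theorem pegSegReverse_to_last {p : ℕ} (hp : p < l.length) :
    pegSegReverse l p (l.length - 1) =
      (l.take p ++ ((l.drop (p + 1)).map fun q => (q.1, flipDeco q.2)).reverse) ++
        [(l[p].1, flipDeco l[p].2)] := by
  have htake : (l.drop p).take (l.length - 1 + 1 - p) = l.drop p :=
    List.take_of_length_le (by simp; omega)
  have hdrop : l.drop (l.length - 1 + 1) = [] := List.drop_eq_nil_of_le (by omega)
  rw [pegSegReverse, htake, hdrop, List.drop_eq_getElem_cons hp]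
  simp only [List.map_cons, List.reverse_cons, List.append_nil, List.append_assoc]

end Reversal

namespace PegRevStep

variable {l l' : PegPerm}

theorem length_eq (h : PegRevStep l l') : l'.length = l.length := by
  obtain ⟨i, j, hij, hj, rfl⟩ := h
  exact length_pegSegReverse hij hj

theorem perm_map_fst (h : PegRevStep l l') : (l'.map Prod.fst).Perm (l.map Prod.fst) := by
  obtain ⟨i, j, hij, -, rfl⟩ := h
  exact map_fst_pegSegReverse_perm hij

theorem cons (p : ℕ × Deco) (h : PegRevStep l l') : PegRevStep (p :: l) (p :: l') := by
  obtain ⟨i, j, hij, hj, rfl⟩ := h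
  exact ⟨i + 1, j + 1, by omega, by simpa using hj, (pegSegReverse_cons p l i j).symm⟩

theorem append_right (l₂ : PegPerm) (h : PegRevStep l l') :
    PegRevStep (l ++ l₂) (l' ++ l₂) := by
  obtain ⟨i, j, hij, hj, rfl⟩ := h
  exact ⟨i, j, hij, by simp; omega, (pegSegReverse_append l₂ hij hj).symm⟩

theorem map_fst (g : ℕ → ℕ) (h : PegRevStep l l') :
    PegRevStep (l.map fun p => (g p.1, p.2)) (l'.map fun p => (g p.1, p.2)) := by
  obtain ⟨i, j, hij, hj, rfl⟩ := h
  exact ⟨i, j, hij, by simpa using hj, (pegSegReverse_map g l i j).symm⟩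

end PegRevStep

theorem reachIn_pegRevStep_length {k : ℕ} {l m : PegPerm} (h : ReachIn PegRevStep k l m) :
    m.length = l.length :=
  ReachIn.apply_eq (fun _ _ h => h.length_eq) h

theorem IsPegPermList.of_reachIn {k : ℕ} {l m : PegPerm} (hl : IsPegPermList l)
    (h : ReachIn PegRevStep k l m) : IsPegPermList m := by
  have hperm : ((m.map Prod.fst : List ℕ) : Multiset ℕ) = (l.map Prod.fst : List ℕ) :=
    ReachIn.apply_eq (g := fun l : PegPerm => ((l.map Prod.fst : List ℕ) : Multiset ℕ))
      (fun _ _ h => Multiset.coe_eq_coe.mpr h.perm_map_fst) h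
  unfold IsPegPermList IsPermList at hl ⊢
  rw [List.length_map, reachIn_pegRevStep_length h, ← List.length_map Prod.fst]
  exact (Multiset.coe_eq_coe.mp hperm).trans hl

theorem idPerm_succ (n : ℕ) : idPerm (n + 1) = idPerm n ++ [n + 1] := by
  simp [idPerm, List.range'_concat, Nat.add_comm]

theorem idPerm_succ' (n : ℕ) : idPerm (n + 1) = 1 :: (idPerm n).map (· + 1) := by
  have := List.map_add_range' (a := 1) 1 n 1
  simp only [idPerm, List.range'_succ]
  simp_all [Nat.add_comm _ 1]

theorem isIdPeg_nil : IsIdPeg [] := ⟨rfl, by simp⟩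

theorem IsIdPeg.append_singleton {m : PegPerm} {d : Deco} (hm : IsIdPeg m)
    (hd : d ≠ Deco.minus) : IsIdPeg (m ++ [(m.length + 1, d)]) := by
  refine ⟨?_, ?_⟩
  · simp [hm.1, idPerm_succ]
  · simp only [List.mem_append, List.mem_singleton]
    rintro q (hq | rfl)
    exacts [hm.2 q hq, hd]

theorem IsIdPeg.cons_pegShift {m : PegPerm} {d : Deco} (hm : IsIdPeg m)
    (hd : d ≠ Deco.minus) : IsIdPeg ((1, d) :: pegShift m) := by
  refine ⟨?_, ?_⟩
  · have h := congrArg (List.map (· + 1)) hm.1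
    simp only [List.map_map] at h
    simp [pegShift, idPerm_succ', ← h, Function.comp_def]
  · simp only [pegShift, List.mem_cons, List.mem_map]
    rintro q (rfl | ⟨p, hp, rfl⟩)
    exacts [hd, hm.2 p hp]

theorem IsPegPermList.of_append_singleton {l : PegPerm} {d : Deco}
    (h : IsPegPermList (l ++ [(l.length + 1, d)])) : IsPegPermList l := by
  unfold IsPegPermList IsPermList at h ⊢
  simp only [List.map_append, List.length_append, List.length_map, List.length_singleton,
    idPerm_succ, List.map_singleton] at h
  simpa using (List.perm_append_right_iff _).mp h

theorem IsPegPermList.of_cons_pegShift {l : PegPerm} {d : Deco}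
    (h : IsPegPermList ((1, d) :: pegShift l)) : IsPegPermList l := by
  unfold IsPegPermList IsPermList at h ⊢
  simp only [pegShift, List.map_cons, List.length_cons, List.length_map, idPerm_succ'] at h
  have h' := h.cons_inv
  rw [List.map_map, show Prod.fst ∘ (fun p : ℕ × Deco => (p.1 + 1, p.2)) =
    (· + 1) ∘ Prod.fst from rfl, ← List.map_map,
    List.map_perm_map_iff (add_left_injective 1)] at h'
  simpa using h'

theorem IsPegPermList.one_le {l : PegPerm} (h : IsPegPermList l) {p : ℕ × Deco} (hp : p ∈ l) :
    1 ≤ p.1 := by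
  have := h.mem_iff.mp (List.mem_map_of_mem hp)
  simp only [idPerm, List.mem_range'] at this
  omega

theorem exists_pegShift_eq {t : PegPerm} (ht : ∀ q ∈ t, 1 ≤ q.1) :
    ∃ γ, pegShift γ = t := by
  refine ⟨t.map fun q => (q.1 - 1, q.2), ?_⟩
  rw [pegShift, List.map_map]
  refine (List.map_congr_left fun q hq => ?_).trans (List.map_id t)
  have := ht q hq
  exact Prod.ext (by simp; omega) rfl

theorem IsPegPermList.exists_fst_eq_length {l : PegPerm} (h : IsPegPermList l) (hl : l ≠ []) :
    ∃ p ∈ l, p.1 = l.length := by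
  have hmem : l.length ∈ idPerm (l.map Prod.fst).length := by
    have := List.length_pos_iff.mpr hl
    simp only [List.length_map, idPerm, List.mem_range']
    exact ⟨l.length - 1, by omega, by omega⟩
  simpa using h.mem_iff.mpr hmem

theorem exists_reachIn_append_singleton {l : PegPerm} {q : ℕ × Deco} (hq : q ∈ l) :
    ∃ k front d, d ≠ Deco.minus ∧ ReachIn PegRevStep k l (front ++ [(q.1, d)]) := by
  obtain ⟨p, hp, rfl⟩ := List.getElem_of_mem hq
  have hstep : PegRevStep l (pegSegReverse l p (l.length - 1)) :=
    ⟨p, _, by omega, by omega, rfl⟩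
  rw [pegSegReverse_to_last hp] at hstep
  set front := l.take p ++ ((l.drop (p + 1)).map fun q => (q.1, flipDeco q.2)).reverse
  cases hd : flipDeco l[p].2 with
  | minus =>
    have hflip : PegRevStep (front ++ [(l[p].1, Deco.minus)]) (front ++ [(l[p].1, Deco.plus)]) :=
      ⟨front.length, front.length, le_rfl, by simp,
        (pegSegReverse_last front (l[p].1, .minus)).symm⟩
    exact ⟨2, front, .plus, by decide, _, hd ▸ hstep, _, hflip, rfl⟩
  | plus => exact ⟨1, front, .plus, by decide, _, hd ▸ hstep, rfl⟩
  | dot => exact ⟨1, front, .dot, by decide, _, hd ▸ hstep, rfl⟩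

theorem IsPegPermList.exists_reachIn_isIdPeg {l : PegPerm} (hl : IsPegPermList l) :
    ∃ k m, IsIdPeg m ∧ ReachIn PegRevStep k l m := by
  induction h : l.length generalizing l with
  | zero => exact ⟨0, [], isIdPeg_nil, List.length_eq_zero_iff.mp h⟩
  | succ n ih =>
    obtain ⟨q, hq, hqn⟩ := hl.exists_fst_eq_length (List.ne_nil_of_length_eq_add_one h)
    obtain ⟨k₁, front, d, hd, h₁⟩ := exists_reachIn_append_singleton hq
    have hlen : front.length = n := by
      simpa [h] using reachIn_pegRevStep_length h₁
    rw [hqn, h, ← hlen] at h₁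
    obtain ⟨k₂, m, hm, h₂⟩ := ih (hl.of_reachIn h₁).of_append_singleton hlen
    have hmlen : m.length = front.length := reachIn_pegRevStep_length h₂
    refine ⟨k₁ + k₂, m ++ [(front.length + 1, d)], ?_,
      h₁.trans (h₂.map (f := (· ++ [(front.length + 1, d)])) fun _ _ h => h.append_right _)⟩
    simpa [hmlen] using hm.append_singleton hd

theorem IsPegPermList.exists_reachIn_pegRd {l : PegPerm} (hl : IsPegPermList l) :
    ∃ m, IsIdPeg m ∧ ReachIn PegRevStep (pegRd l) l m := by
  obtain ⟨k, m, hm, h⟩ := hl.exists_reachIn_isIdPeg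
  exact Nat.sInf_mem (s := {k | ∃ m, IsIdPeg m ∧ ReachIn PegRevStep k l m}) ⟨k, m, hm, h⟩

theorem pegRd_le_of_reachIn {k : ℕ} {l m : PegPerm} (hm : IsIdPeg m)
    (h : ReachIn PegRevStep k l m) : pegRd l ≤ k :=
  Nat.sInf_le ⟨m, hm, h⟩

theorem nil_mem_PegBrd (k : ℕ) : [] ∈ PegBrd k :=
  ⟨by simp [IsPegPermList, IsPermList, idPerm],
    (pegRd_le_of_reachIn isIdPeg_nil (k := 0) rfl).trans k.zero_le⟩

theorem CleanCompact.of_append {l l' : PegPerm} (h : CleanCompact (l ++ l')) : CleanCompact l := by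
  intro i hi
  rw [← List.getD_append _ l' _ _ (by omega), ← List.getD_append _ l' _ _ hi]
  exact h i (by simp; omega)

theorem CleanCompact.of_cons_pegShift {p : ℕ × Deco} {l : PegPerm}
    (h : CleanCompact (p :: pegShift l)) : CleanCompact l := by
  intro i hi hs
  apply h (i + 1) (by simp [pegShift]; omega)
  rw [List.getD_eq_getElem _ _ (by omega), List.getD_eq_getElem _ _ hi] at hs
  simpa [pegShift, StripPair, List.getD_eq_getElem, hi, show i < l.length by omega] using hs

theorem isPegPattern_of_sublist {σ τ : PegPerm} (h : σ.Sublist τ) : IsPegPattern σ τ :=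
  ⟨σ, h, ⟨rfl, fun _ _ _ _ => Iff.rfl⟩, fun _ _ => ⟨id, id⟩⟩

theorem isPegPattern_cons_pegShift (p : ℕ × Deco) (l : PegPerm) :
    IsPegPattern l (p :: pegShift l) := by
  refine ⟨pegShift l, List.sublist_cons_self _ _, ⟨by simp [pegShift], ?_⟩, ?_⟩
  · intro i j hi hj
    simp only [pegShift, List.length_map] at hi hj
    simp [pegShift, hi, hj]
  · intro i hi
    simp only [pegShift, List.length_map] at hi
    simp [pegShift, hi]

theorem not_mem_CCPegBasis_PegBrd_of_lift {k : ℕ} {πε γ : PegPerm} (f : PegPerm → PegPerm)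
    (hf : ∀ l l', PegRevStep l l' → PegRevStep (f l) (f l'))
    (hid : ∀ m, m.length = γ.length → IsIdPeg m → IsIdPeg (f m))
    (hγ : IsPegPermList γ) (hcc : CleanCompact γ) (hpat : IsPegPattern γ πε)
    (hlt : γ.length < πε.length) (hfγ : f γ = πε) : πε ∉ CCPegBasis (PegBrd k) := by
  rintro ⟨hperm, -, hnot, hmin⟩
  have hγk : pegRd γ ≤ k := (hmin γ hγ hcc hpat (by rintro rfl; omega)).2
  obtain ⟨m, hm, hreach⟩ := hγ.exists_reachIn_pegRd
  have hlift : ReachIn PegRevStep (pegRd γ) πε (f m) := hfγ ▸ hreach.map hf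
  exact hnot ⟨hperm,
    (pegRd_le_of_reachIn (hid m (reachIn_pegRevStep_length hreach) hm) hlift).trans hγk⟩

theorem headD_ne_of_mem_CCPegBasis {k : ℕ} {πε : PegPerm}
    (h : πε ∈ CCPegBasis (PegBrd k)) {d : Deco} (hd : d ≠ Deco.minus) :
    πε.headD pegDefault ≠ (1, d) := by
  intro hhead
  cases πε with
  | nil => simp [pegDefault] at hhead
  | cons p t =>
    obtain rfl : p = (1, d) := by simpa using hhead
    obtain ⟨γ, rfl⟩ := exists_pegShift_eq fun q hq => h.1.one_le (List.mem_cons_of_mem _ hq)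
    exact not_mem_CCPegBasis_PegBrd_of_lift (fun l => (1, d) :: pegShift l)
      (fun _ _ hs => (hs.map_fst (· + 1)).cons _) (fun _ _ hm => hm.cons_pegShift hd)
      h.1.of_cons_pegShift h.2.1.of_cons_pegShift (isPegPattern_cons_pegShift _ _)
      (by simp [pegShift]) rfl h

theorem getLastD_ne_of_mem_CCPegBasis {k : ℕ} {πε : PegPerm}
    (h : πε ∈ CCPegBasis (PegBrd k)) {d : Deco} (hd : d ≠ Deco.minus) :
    πε.getLastD pegDefault ≠ (πε.length, d) := by
  intro hlast
  obtain rfl | ⟨γ, q, rfl⟩ := πε.eq_nil_or_concat'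
  · exact h.2.2.1 (nil_mem_PegBrd k)
  obtain rfl : q = (γ.length + 1, d) := by simpa using hlast
  exact not_mem_CCPegBasis_PegBrd_of_lift (· ++ [(γ.length + 1, d)])
    (fun _ _ hs => hs.append_right _) (fun _ hlen hm => hlen ▸ hm.append_singleton hd)
    h.1.of_append_singleton h.2.1.of_append
    (isPegPattern_of_sublist (List.sublist_append_left _ _)) (by simp) rfl h

/-- a clean compact peg basis permutation of `B̂_k^{rd}` neither begins
with `1` decorated `+` or `•` nor ends with its maximum decorated `+` or `•`. -/
theorem basis_first_last (k : ℕ) (πε : PegPerm) (h : πε ∈ CCPegBasis (PegBrd k)) :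
    πε.headD pegDefault ≠ (1, Deco.plus) ∧ πε.headD pegDefault ≠ (1, Deco.dot) ∧
    πε.getLastD pegDefault ≠ (πε.length, Deco.plus) ∧
    πε.getLastD pegDefault ≠ (πε.length, Deco.dot) :=
  ⟨headD_ne_of_mem_CCPegBasis h (by decide), headD_ne_of_mem_CCPegBasis h (by decide),
    getLastD_ne_of_mem_CCPegBasis h (by decide), getLastD_ne_of_mem_CCPegBasis h (by decide)⟩
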